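/- Let m ≥ 3, r > 0, c_j = 2(j−1)r sin(π/m) for 1 ≤ j ≤ m+1, and let Q be the uniform distribution on [0, 2mr sin(π/m)]. Let k ≥ 1, 0 < q < m, and n = mk + 1 + q. Then the n-th conditional unconstrained quantization error for Q with respect to the conditional set β = {c_j : 1 ≤ j ≤ m+1} equals r² q sin²(π/m)/(3m(k+1)²) + r²(m−q) sin²(π/m)/(3mk²), and this infimum is attained by the set γ_n = ( ⋃_{j=1}^{q} { c_j + 2(i−1)r sin(π/m)/(k+1) : 1 ≤ i ≤ k+2 } ) ∪ ( ⋃_{j=q+1}^{m} { c_j + 2(i−1)r sin(π/m)/k : 1 ≤ i ≤ k+1 } ). -/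

import Mathlib

/-!
Write `h = 2 r sin (π / m)`, so that `Q` is uniform on `[0, m h]` and the conditional set is the
grid `{i h : i ≤ m}`. Points of a set `S ⊇ β` cut each cell `[j h, (j + 1) h]` into gaps, and a
gap of length `ℓ` contributes `ℓ ^ 3 / 12` to `∫ min_{a ∈ S} (x - a) ^ 2`; by Hölder's inequality
a cell with `t` points of `S` in its interior contributes at least `h ^ 3 / (12 (t + 1) ^ 2)`,
with equality for equal gaps. The `n - (m + 1) = m (k - 1) + q` free points are shared among the
`m` cells, and convexity of `t ↦ 1 / (t + 1) ^ 2` makes the best sharing give `k` points to `q`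
cells and `k - 1` to the others, which is what `γ_n` does.
-/

open MeasureTheory Set Filter

/-- The uniform distribution on `[a, b]`: normalized Lebesgue measure restricted to `[a, b]`. -/
noncomputable def uniformOn (a b : ℝ) : Measure ℝ :=
  (ENNReal.ofReal (b - a))⁻¹ • volume.restrict (Set.Icc a b)

/-- The distortion error of a set `s` of points for the measure `P`. -/
noncomputable def distortion (P : Measure ℝ) (s : Set ℝ) : ℝ :=
  ∫ x, sInf ((fun a => (x - a) ^ 2) '' s) ∂P

/-- The `n`-th conditional (unconstrained) quantization error for `P` with respect to
the conditional set `β`. -/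
noncomputable def condQuantError (P : Measure ℝ) (β : Set ℝ) (n : ℕ) : ℝ :=
  sInf { v : ℝ | ∃ α : Set ℝ, α.Finite ∧ α.ncard ≤ n - β.ncard ∧ v = distortion P (α ∪ β) }

open scoped Finset
open intervalIntegral

noncomputable def minSqDist (S : Set ℝ) (x : ℝ) : ℝ :=
  sInf ((fun a => (x - a) ^ 2) '' S)

section MinSqDist

variable {S : Set ℝ}

lemma minSqDist_le {a : ℝ} (ha : a ∈ S) (x : ℝ) : minSqDist S x ≤ (x - a) ^ 2 :=
  csInf_le ⟨0, by rintro _ ⟨b, -, rfl⟩; positivity⟩ ⟨a, ha, rfl⟩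

lemma le_minSqDist (hS : S.Nonempty) {x v : ℝ} (h : ∀ a ∈ S, v ≤ (x - a) ^ 2) :
    v ≤ minSqDist S x :=
  le_csInf (hS.image _) (by rintro _ ⟨a, ha, rfl⟩; exact h a ha)

lemma continuous_minSqDist (hS : S.Finite) (hne : S.Nonempty) : Continuous (minSqDist S) := by
  lift S to Finset ℝ using hS
  have hne' : S.Nonempty := Finset.coe_nonempty.mp hne
  convert Continuous.finset_inf'_apply hne' (f := fun a x => (x - a) ^ 2)
    (fun a _ => by fun_prop) using 1
  ext x
  exact (S.inf'_eq_csInf_image hne' _).symm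

lemma intervalIntegrable_minSqDist (hS : S.Finite) (hne : S.Nonempty) (a b : ℝ) :
    IntervalIntegrable (minSqDist S) volume a b :=
  (continuous_minSqDist hS hne).intervalIntegrable a b

lemma minSqDist_le_min {p p' : ℝ} (hp : p ∈ S) (hp' : p' ∈ S) (x : ℝ) :
    minSqDist S x ≤ min ((x - p) ^ 2) ((x - p') ^ 2) :=
  le_min (minSqDist_le hp x) (minSqDist_le hp' x)

lemma minSqDist_eq_min_of_gap {p p' : ℝ} (hp : p ∈ S) (hp' : p' ∈ S)
    (hgap : ∀ a ∈ S, a ≤ p ∨ p' ≤ a) {x : ℝ} (hx : x ∈ Icc p p') :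
    minSqDist S x = min ((x - p) ^ 2) ((x - p') ^ 2) := by
  refine le_antisymm (minSqDist_le_min hp hp' x) (le_minSqDist ⟨p, hp⟩ fun a ha => ?_)
  rcases hgap a ha with h | h
  · exact (min_le_left _ _).trans (by nlinarith [hx.1])
  · exact (min_le_right _ _).trans (by nlinarith [hx.2])

end MinSqDist

lemma integral_min_sq_sub {p p' : ℝ} (hle : p ≤ p') :
    ∫ x in p..p', min ((x - p) ^ 2) ((x - p') ^ 2) = (p' - p) ^ 3 / 12 := by
  have hcont : Continuous fun x => min ((x - p) ^ 2) ((x - p') ^ 2) := by fun_prop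
  rw [← integral_add_adjacent_intervals (hcont.intervalIntegrable p ((p + p') / 2))
    (hcont.intervalIntegrable _ p')]
  have hleft : ∫ x in p..(p + p') / 2, min ((x - p) ^ 2) ((x - p') ^ 2)
      = ∫ x in p..(p + p') / 2, (x - p) ^ 2 := by
    refine integral_congr fun x hx => min_eq_left ?_
    rw [uIcc_of_le (by linarith)] at hx
    nlinarith [hx.1, hx.2]
  have hright : ∫ x in (p + p') / 2..p', min ((x - p) ^ 2) ((x - p') ^ 2)
      = ∫ x in (p + p') / 2..p', (x - p') ^ 2 := by
    refine integral_congr fun x hx => min_eq_right ?_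
    rw [uIcc_of_le (by linarith)] at hx
    nlinarith [hx.1, hx.2]
  rw [hleft, hright, integral_comp_sub_right (· ^ 2), integral_comp_sub_right (· ^ 2),
    integral_pow, integral_pow]
  ring

section Gap

variable {S : Set ℝ} {p p' : ℝ}

lemma integral_minSqDist_of_gap (hp : p ∈ S) (hp' : p' ∈ S) (hle : p ≤ p')
    (hgap : ∀ a ∈ S, a ≤ p ∨ p' ≤ a) :
    ∫ x in p..p', minSqDist S x = (p' - p) ^ 3 / 12 := by
  rw [← integral_min_sq_sub hle]
  refine integral_congr fun x hx => minSqDist_eq_min_of_gap hp hp' hgap ?_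
  rwa [uIcc_of_le hle] at hx

lemma integral_minSqDist_le (hS : S.Finite) (hp : p ∈ S) (hp' : p' ∈ S) (hle : p ≤ p') :
    ∫ x in p..p', minSqDist S x ≤ (p' - p) ^ 3 / 12 := by
  rw [← integral_min_sq_sub hle]
  exact integral_mono_on hle (intervalIntegrable_minSqDist hS ⟨p, hp⟩ p p')
    ((by fun_prop : Continuous _).intervalIntegrable _ _) fun x _ => minSqDist_le_min hp hp' x

end Gap

lemma add_pow_three_div_le {a b τ : ℝ} (ha : 0 ≤ a) (hb : 0 ≤ b) (hτ : 0 < τ) :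
    (a + b) ^ 3 / (12 * (τ + 1) ^ 2) ≤ a ^ 3 / 12 + b ^ 3 / (12 * τ ^ 2) := by
  have hdiff : a ^ 3 / 12 + b ^ 3 / (12 * τ ^ 2) - (a + b) ^ 3 / (12 * (τ + 1) ^ 2)
      = (b - τ * a) ^ 2 * ((2 * τ + 1) * b + τ * (τ + 2) * a) / (12 * τ ^ 2 * (τ + 1) ^ 2) := by
    field_simp
    ring
  have : 0 ≤ (b - τ * a) ^ 2 * ((2 * τ + 1) * b + τ * (τ + 2) * a) / (12 * τ ^ 2 * (τ + 1) ^ 2) := by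
    positivity
  linarith

theorem le_integral_minSqDist (S : Finset ℝ) {u v : ℝ} (hu : u ∈ S) (hv : v ∈ S) (huv : u ≤ v) :
    (v - u) ^ 3 / (12 * ((#{a ∈ S | a ∈ Ioo u v} : ℕ) + 1) ^ 2)
      ≤ ∫ x in u..v, minSqDist S x := by
  suffices ∀ t : ℕ, ∀ u ∈ S, u ≤ v → #{a ∈ S | a ∈ Ioo u v} = t →
      (v - u) ^ 3 / (12 * ((t : ℝ) + 1) ^ 2) ≤ ∫ x in u..v, minSqDist S x from
    this _ u hu huv rfl
  intro t
  induction t with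
  | zero =>
    intro u hu huv ht
    have hgap : ∀ a ∈ S, a ≤ u ∨ v ≤ a := fun a ha => by
      by_contra! h
      exact Finset.filter_eq_empty_iff.mp (Finset.card_eq_zero.mp ht) ha h
    rw [integral_minSqDist_of_gap hu hv huv hgap]
    simp
  | succ t ih =>
    intro u hu huv ht
    set T := S.filter (· ∈ Ioo u v)
    have hT : T.Nonempty := Finset.card_pos.mp (by omega)
    set w := T.min' hT
    obtain ⟨hwS, huw, hwv⟩ := Finset.mem_filter.mp (T.min'_mem hT)
    have hgap : ∀ a ∈ S, a ≤ u ∨ w ≤ a := fun a ha => by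
      by_contra! h
      exact (T.min'_le a (by simp [T, ha, h.1, h.2.trans hwv])).not_gt h.2
    have hright : #{a ∈ S | a ∈ Ioo w v} = t := by
      have : S.filter (· ∈ Ioo w v) = T.erase w := by
        ext a
        simp only [Finset.mem_filter, Finset.mem_erase, mem_Ioo, T]
        refine ⟨fun ⟨ha, hwa, hav⟩ => ⟨hwa.ne', ha, huw.trans hwa, hav⟩,
          fun ⟨hne, ha, hua, hav⟩ => ⟨ha, ?_, hav⟩⟩
        exact (T.min'_le a (by simp [T, ha, hua, hav])).lt_of_ne' hne
      rw [this, Finset.card_erase_of_mem (T.min'_mem hT), ht, Nat.add_sub_cancel]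
    have hne : (S : Set ℝ).Nonempty := ⟨u, hu⟩
    rw [← integral_add_adjacent_intervals
      (intervalIntegrable_minSqDist S.finite_toSet hne u w)
      (intervalIntegrable_minSqDist S.finite_toSet hne w v),
      integral_minSqDist_of_gap hu hwS huw.le hgap]
    calc (v - u) ^ 3 / (12 * ((↑(t + 1) : ℝ) + 1) ^ 2)
        = ((w - u) + (v - w)) ^ 3 / (12 * ((t + 1 : ℝ) + 1) ^ 2) := by push_cast; ring_nf
      _ ≤ (w - u) ^ 3 / 12 + (v - w) ^ 3 / (12 * ((t : ℝ) + 1) ^ 2) :=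
        add_pow_three_div_le (sub_nonneg.2 huw.le) (sub_nonneg.2 hwv.le) (by positivity)
      _ ≤ _ := by gcongr; exact ih w hwS hwv.le hright

/-- The secant of the convex function `x ↦ 1 / x ^ 2` through `K` and `K + 1` lies below its
graph outside `(K, K + 1)`. -/
lemma secant_le_one_div_sq {K x : ℝ} (hK : 0 < K) (hx : 0 < x) (hout : x ≤ K ∨ K + 1 ≤ x) :
    1 / K ^ 2 - (1 / K ^ 2 - 1 / (K + 1) ^ 2) * (x - K) ≤ 1 / x ^ 2 := by
  have hdiff : 1 / x ^ 2 - (1 / K ^ 2 - (1 / K ^ 2 - 1 / (K + 1) ^ 2) * (x - K))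
      = (x - K) * (x - (K + 1)) * ((2 * K + 1) * x + K * (K + 1))
        / (x ^ 2 * K ^ 2 * (K + 1) ^ 2) := by
    field_simp
    ring
  have hprod : 0 ≤ (x - K) * (x - (K + 1)) := by
    rcases hout with h | h <;> nlinarith
  have : 0 ≤ (x - K) * (x - (K + 1)) * ((2 * K + 1) * x + K * (K + 1))
      / (x ^ 2 * K ^ 2 * (K + 1) ^ 2) := by positivity
  linarith

/-- Distributing at most `#s * (k - 1) + q` points over the `#s` cells, the sum of the
costs `1 / (t + 1) ^ 2` is least when `q` cells receive `k` points and the others `k - 1`. -/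
lemma sum_one_div_sq_ge {ι : Type*} (s : Finset ι) (t : ι → ℕ) {k q : ℕ} (hk : 1 ≤ k)
    (hsum : ∑ j ∈ s, t j ≤ #s * (k - 1) + q) :
    q / ((k : ℝ) + 1) ^ 2 + (#s - q) / (k : ℝ) ^ 2 ≤ ∑ j ∈ s, 1 / ((t j : ℝ) + 1) ^ 2 := by
  have hK : (1 : ℝ) ≤ k := by exact_mod_cast hk
  set b : ℝ := 1 / (k : ℝ) ^ 2 - 1 / ((k : ℝ) + 1) ^ 2
  have hb : 0 ≤ b := sub_nonneg.2 (one_div_le_one_div_of_le (by positivity) (by nlinarith))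
  have hsumR : ∑ j ∈ s, ((t j : ℝ) + 1 - k) ≤ q := by
    have : (∑ j ∈ s, t j : ℝ) ≤ #s * ((k : ℝ) - 1) + q := by
      exact_mod_cast (Nat.cast_le.mpr hsum).trans_eq (by push_cast [Nat.cast_sub hk]; ring)
    simp only [Finset.sum_sub_distrib, Finset.sum_add_distrib, Finset.sum_const, nsmul_eq_mul]
    linarith
  calc q / ((k : ℝ) + 1) ^ 2 + (#s - q) / (k : ℝ) ^ 2 = #s / (k : ℝ) ^ 2 - b * q := by ring
    _ ≤ #s / (k : ℝ) ^ 2 - b * ∑ j ∈ s, ((t j : ℝ) + 1 - k) := by gcongr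
    _ = ∑ j ∈ s, (1 / (k : ℝ) ^ 2 - b * ((t j : ℝ) + 1 - k)) := by
      simp only [Finset.sum_sub_distrib, ← Finset.mul_sum, Finset.sum_const, nsmul_eq_mul]
      ring
    _ ≤ ∑ j ∈ s, 1 / ((t j : ℝ) + 1) ^ 2 := by
      refine Finset.sum_le_sum fun j _ => secant_le_one_div_sq (by positivity) (by positivity) ?_
      rcases Nat.lt_or_ge (t j) k with h | h
      · left; exact_mod_cast h
      · right; exact_mod_cast Nat.succ_le_succ h

section Grid

variable {h : ℝ} {m : ℕ}

lemma sum_card_filter_Ioo_le (hh : 0 < h) (S A : Finset ℝ)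
    (hA : ∀ a ∈ S, a ∉ A → ∃ i : ℕ, a = i * h) :
    ∑ j ∈ Finset.range m, #{a ∈ S | a ∈ Ioo (j * h) ((j + 1) * h)} ≤ #A := by
  classical
  rw [← Finset.card_biUnion]
  · refine Finset.card_le_card (Finset.biUnion_subset.2 fun j _ a ha => ?_)
    obtain ⟨haS, hja, haj⟩ := Finset.mem_filter.mp ha
    by_contra haA
    obtain ⟨i, rfl⟩ := hA a haS haA
    have h₁ : (j : ℝ) < i := lt_of_mul_lt_mul_right hja hh.le
    have h₂ : (i : ℝ) < j + 1 := lt_of_mul_lt_mul_right haj hh.le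
    norm_cast at h₁ h₂
    omega
  · intro j _ j' _ hjj'
    refine Finset.disjoint_left.2 fun a ha ha' => ?_
    obtain ⟨-, hja, haj⟩ := Finset.mem_filter.mp ha
    obtain ⟨-, hja', haj'⟩ := Finset.mem_filter.mp ha'
    rcases Nat.lt_or_gt_of_ne hjj' with hlt | hlt
    · have : (j : ℝ) + 1 ≤ j' := by exact_mod_cast hlt
      nlinarith
    · have : (j' : ℝ) + 1 ≤ j := by exact_mod_cast hlt
      nlinarith

theorem le_integral_minSqDist_of_grid (hh : 0 < h) {k q : ℕ} (hk : 1 ≤ k) (S A : Finset ℝ)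
    (hgrid : ∀ i ≤ m, (i : ℝ) * h ∈ S) (hA : ∀ a ∈ S, a ∉ A → ∃ i : ℕ, a = i * h)
    (hcard : #A ≤ m * (k - 1) + q) :
    h ^ 3 / 12 * (q / ((k : ℝ) + 1) ^ 2 + (m - q) / (k : ℝ) ^ 2)
      ≤ ∫ x in (0 : ℝ)..m * h, minSqDist S x := by
  set t : ℕ → ℕ := fun j => #{a ∈ S | a ∈ Ioo (j * h) ((j + 1) * h)}
  have hcell : ∀ j < m, h ^ 3 / 12 * (1 / ((t j : ℝ) + 1) ^ 2)
      ≤ ∫ x in (j * h : ℝ)..((j + 1) * h), minSqDist S x := fun j hj => by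
    have := le_integral_minSqDist S (hgrid j hj.le) (hgrid (j + 1) hj) (by gcongr; simp)
    push_cast at this
    rw [show ((j + 1) * h - j * h : ℝ) = h by ring] at this
    exact (div_mul_div_comm _ _ _ _).trans_le (by simpa only [mul_one] using this)
  have hne : (S : Set ℝ).Nonempty := ⟨_, hgrid 0 m.zero_le⟩
  calc h ^ 3 / 12 * (q / ((k : ℝ) + 1) ^ 2 + (m - q) / (k : ℝ) ^ 2)
      ≤ h ^ 3 / 12 * ∑ j ∈ Finset.range m, 1 / ((t j : ℝ) + 1) ^ 2 := by
        gcongr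
        simpa using sum_one_div_sq_ge (Finset.range m) t hk
          ((sum_card_filter_Ioo_le hh S A hA).trans (by simpa using hcard))
    _ ≤ ∑ j ∈ Finset.range m, ∫ x in (j * h : ℝ)..((j + 1) * h), minSqDist S x := by
        rw [Finset.mul_sum]
        exact Finset.sum_le_sum fun j hj => hcell j (Finset.mem_range.mp hj)
    _ = ∫ x in (0 : ℝ)..m * h, minSqDist S x := by
        simpa using sum_integral_adjacent_intervals (a := fun j : ℕ => (j : ℝ) * h) (n := m)
          fun j _ => intervalIntegrable_minSqDist S.finite_toSet hne _ _

end Grid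

lemma integral_minSqDist_le_of_progression {S : Set ℝ} (hS : S.Finite) {a δ : ℝ} (hδ : 0 ≤ δ)
    {N : ℕ} (hmem : ∀ i ≤ N, a + i * δ ∈ S) :
    ∫ x in a..a + N * δ, minSqDist S x ≤ N * δ ^ 3 / 12 := by
  have hne : S.Nonempty := ⟨_, hmem 0 N.zero_le⟩
  calc ∫ x in a..a + N * δ, minSqDist S x
      = ∑ i ∈ Finset.range N, ∫ x in a + i * δ..a + ↑(i + 1) * δ, minSqDist S x := by
        simpa using (sum_integral_adjacent_intervals (a := fun i : ℕ => a + i * δ) (n := N)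
          fun i _ => intervalIntegrable_minSqDist hS hne _ _).symm
    _ ≤ ∑ i ∈ Finset.range N, δ ^ 3 / 12 := by
        refine Finset.sum_le_sum fun i hi => ?_
        have hi := Finset.mem_range.mp hi
        have := integral_minSqDist_le hS (hmem i hi.le) (hmem (i + 1) hi) (by gcongr; simp)
        rwa [show a + ↑(i + 1) * δ - (a + i * δ) = δ by push_cast; ring] at this
    _ = N * δ ^ 3 / 12 := by simp [mul_div_assoc]

lemma natCast_mul_add_natCast_mul_div_self {N : ℕ} (hN : N ≠ 0) (j : ℕ) (h : ℝ) :
    (j * h + N * (h / N) : ℝ) = ↑(j + 1) * h := by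
  have : (N : ℝ) ≠ 0 := by exact_mod_cast hN
  push_cast
  field_simp

noncomputable def cellGrid (h : ℝ) (N : ℕ → ℕ) (m : ℕ) : Finset ℝ :=
  (Finset.range m).biUnion fun j => (Finset.Iic (N j)).image fun i : ℕ => j * h + i * (h / N j)

section CellGrid

variable {h : ℝ} {N : ℕ → ℕ} {m : ℕ}

lemma mem_cellGrid {j i : ℕ} (hj : j < m) (hi : i ≤ N j) :
    j * h + i * (h / N j) ∈ cellGrid h N m :=
  Finset.mem_biUnion.2 ⟨j, Finset.mem_range.2 hj, Finset.mem_image.2 ⟨i, Finset.mem_Iic.2 hi, rfl⟩⟩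

lemma integral_minSqDist_le_of_cellGrid_subset {S : Set ℝ} (hS : S.Finite) (hh : 0 ≤ h)
    (hN : ∀ j < m, N j ≠ 0) (hsub : ↑(cellGrid h N m) ⊆ S) :
    ∫ x in (0 : ℝ)..m * h, minSqDist S x ≤ ∑ j ∈ Finset.range m, h ^ 3 / (12 * (N j) ^ 2) := by
  have hsplit := sum_integral_adjacent_intervals (a := fun j : ℕ => (j : ℝ) * h) (n := m)
    fun j hj => intervalIntegrable_minSqDist hS ⟨_, hsub (mem_cellGrid (i := 0) hj (N j).zero_le)⟩ _ _
  simp only [Nat.cast_zero, zero_mul] at hsplit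
  rw [← hsplit]
  refine Finset.sum_le_sum fun j hj => ?_
  have hj := Finset.mem_range.mp hj
  have hNj : (N j : ℝ) ≠ 0 := by exact_mod_cast hN j hj
  have := integral_minSqDist_le_of_progression hS (div_nonneg hh (N j).cast_nonneg)
    fun i hi => hsub (mem_cellGrid hj hi)
  rw [natCast_mul_add_natCast_mul_div_self (hN j hj)] at this
  exact this.trans_eq (by field_simp)

lemma mul_mem_cellGrid (hN : ∀ j < m, N j ≠ 0) {j : ℕ} (hj : j ≤ m) (hm : 0 < m) :
    (j : ℝ) * h ∈ cellGrid h N m := by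
  rcases hj.lt_or_eq with hj | rfl
  · simpa using mem_cellGrid (h := h) (i := 0) hj (N j).zero_le
  · obtain ⟨j, rfl⟩ := Nat.exists_eq_add_one_of_ne_zero hm.ne'
    have := mem_cellGrid (h := h) (N := N) j.lt_add_one le_rfl
    rwa [natCast_mul_add_natCast_mul_div_self (hN j j.lt_add_one)] at this

lemma ncard_cellGrid_sdiff_le (hN : ∀ j < m, N j ≠ 0) {β : Set ℝ}
    (hβ : ∀ j ≤ m, (j : ℝ) * h ∈ β) :
    ((cellGrid h N m : Set ℝ) \ β).ncard ≤ ∑ j ∈ Finset.range m, (N j - 1) := by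
  classical
  set I := (Finset.range m).biUnion fun j =>
    (Finset.Ioo 0 (N j)).image fun i : ℕ => (j : ℝ) * h + i * (h / N j)
  have hsub : (cellGrid h N m : Set ℝ) \ β ⊆ I := by
    rintro _ ⟨hx, hxβ⟩
    obtain ⟨j, hj, i, hi, rfl⟩ := by simpa [cellGrid] using hx
    have hi0 : i ≠ 0 := by
      rintro rfl
      exact hxβ (by simpa using hβ j hj.le)
    have hiN : i ≠ N j := by
      rintro rfl
      exact hxβ (natCast_mul_add_natCast_mul_div_self (hN j hj) j h ▸ hβ (j + 1) hj)
    exact Finset.mem_biUnion.2 ⟨j, Finset.mem_range.2 hj,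
      Finset.mem_image.2 ⟨i, Finset.mem_Ioo.2 ⟨by omega, by omega⟩, rfl⟩⟩
  calc ((cellGrid h N m : Set ℝ) \ β).ncard ≤ #I := by
        simpa using Set.ncard_le_ncard hsub I.finite_toSet
    _ ≤ ∑ j ∈ Finset.range m, (N j - 1) :=
        Finset.card_biUnion_le.trans <| Finset.sum_le_sum fun j _ =>
          Finset.card_image_le.trans (by simp)

end CellGrid

lemma distortion_uniformOn {a b : ℝ} (hab : a < b) (S : Set ℝ) :
    distortion (uniformOn a b) S = (b - a)⁻¹ * ∫ x in a..b, minSqDist S x := by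
  rw [distortion, uniformOn, MeasureTheory.integral_smul_measure, ENNReal.toReal_inv,
    ENNReal.toReal_ofReal (sub_nonneg.2 hab.le), smul_eq_mul, integral_of_le hab.le,
    ← integral_Icc_eq_integral_Ioc]
  rfl

section Uniform

variable {h : ℝ} {m k q : ℕ}

lemma le_distortion_uniformOn_union (hh : 0 < h) (hm : 0 < m) (hk : 1 ≤ k) {α β : Set ℝ}
    (hα : α.Finite) (hβ : β.Finite) (hβmem : ∀ j ≤ m, (j : ℝ) * h ∈ β)
    (hβgrid : ∀ a ∈ β, ∃ i : ℕ, a = i * h) (hcard : α.ncard ≤ m * (k - 1) + q) :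
    h ^ 2 / (12 * m) * (q / ((k : ℝ) + 1) ^ 2 + (m - q) / (k : ℝ) ^ 2)
      ≤ distortion (uniformOn 0 (m * h)) (α ∪ β) := by
  have hmh : (0 : ℝ) < m * h := by positivity
  lift α to Finset ℝ using hα
  lift β to Finset ℝ using hβ
  classical
  have hlow := le_integral_minSqDist_of_grid hh hk (α ∪ β) α (q := q)
    (fun j hj => Finset.mem_union_right _ (hβmem j hj))
    (fun a ha haα => hβgrid a (by simpa [haα] using ha))
    (by simpa using hcard)
  rw [distortion_uniformOn hmh, sub_zero, ← Finset.coe_union]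
  calc h ^ 2 / (12 * m) * (q / ((k : ℝ) + 1) ^ 2 + (m - q) / (k : ℝ) ^ 2)
      = (m * h)⁻¹ * (h ^ 3 / 12 * (q / ((k : ℝ) + 1) ^ 2 + (m - q) / (k : ℝ) ^ 2)) := by
        field_simp
    _ ≤ _ := by gcongr

lemma distortion_uniformOn_cellGrid_le (hh : 0 < h) (hm : 0 < m) {N : ℕ → ℕ}
    (hN : ∀ j < m, N j ≠ 0) :
    distortion (uniformOn 0 (m * h)) ↑(cellGrid h N m)
      ≤ h ^ 2 / (12 * m) * ∑ j ∈ Finset.range m, 1 / (N j : ℝ) ^ 2 := by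
  rw [distortion_uniformOn (by positivity), sub_zero]
  calc (m * h)⁻¹ * ∫ x in (0 : ℝ)..m * h, minSqDist (cellGrid h N m) x
      ≤ (m * h)⁻¹ * ∑ j ∈ Finset.range m, h ^ 3 / (12 * (N j : ℝ) ^ 2) := by
        gcongr
        exact integral_minSqDist_le_of_cellGrid_subset (Finset.finite_toSet _) hh.le hN subset_rfl
    _ = h ^ 2 / (12 * m) * ∑ j ∈ Finset.range m, 1 / (N j : ℝ) ^ 2 := by
        rw [Finset.mul_sum, Finset.mul_sum]
        refine Finset.sum_congr rfl fun j _ => ?_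
        field_simp

end Uniform

lemma sum_range_apply_ite_lt {M : Type*} [AddCommMonoid M] {q m : ℕ} (hqm : q ≤ m)
    (f : ℕ → M) (a b : ℕ) :
    ∑ j ∈ Finset.range m, f (if j < q then a else b) = q • f a + (m - q) • f b := by
  rw [← Finset.sum_range_add_sum_Ico _ hqm,
    Finset.sum_congr rfl fun j hj => congrArg f (if_pos (Finset.mem_range.1 hj)),
    Finset.sum_congr rfl fun j hj => congrArg f (if_neg (not_lt.2 (Finset.mem_Ico.1 hj).1))]
  simp

section ImageIcc

variable {h : ℝ} {c : ℕ → ℝ} {m : ℕ}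

lemma natCast_mul_mem_image_Icc (hc : ∀ j : ℕ, c j = ((j : ℝ) - 1) * h) {j : ℕ} (hj : j ≤ m) :
    (j : ℝ) * h ∈ c '' Icc 1 (m + 1) :=
  ⟨j + 1, ⟨by omega, by omega⟩, by rw [hc]; push_cast; ring⟩

lemma exists_eq_natCast_mul_of_mem_image_Icc (hc : ∀ j : ℕ, c j = ((j : ℝ) - 1) * h) {a : ℝ}
    (ha : a ∈ c '' Icc 1 (m + 1)) : ∃ i : ℕ, a = i * h := by
  obtain ⟨j, hj, rfl⟩ := ha
  exact ⟨j - 1, by rw [hc, Nat.cast_sub hj.1, Nat.cast_one]⟩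

lemma ncard_image_Icc (hc : ∀ j : ℕ, c j = ((j : ℝ) - 1) * h) (hh : h ≠ 0) :
    (c '' Icc 1 (m + 1)).ncard = m + 1 := by
  have hcinj : Function.Injective c := fun i j hij => by
    rw [hc, hc] at hij
    exact_mod_cast sub_left_inj.1 (mul_right_cancel₀ hh hij)
  rw [Set.ncard_image_of_injective _ hcinj, ← Finset.coe_Icc, Set.ncard_coe_finset,
    Nat.card_Icc, Nat.add_sub_cancel]

lemma image_Icc_subset_cellGrid (hc : ∀ j : ℕ, c j = ((j : ℝ) - 1) * h) {N : ℕ → ℕ}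
    (hN : ∀ j < m, N j ≠ 0) (hm : 0 < m) : c '' Icc 1 (m + 1) ⊆ cellGrid h N m := by
  rintro _ ⟨j, hj, rfl⟩
  rw [hc, ← Nat.cast_one, ← Nat.cast_sub hj.1]
  exact mul_mem_cellGrid hN (by have := hj.2; omega) hm

end ImageIcc

theorem condQuantError_uniformOn_grid {h : ℝ} (hh : 0 < h) {m k q : ℕ} (hk : 1 ≤ k) (hqm : q < m)
    {n : ℕ} (hn : n = m * k + 1 + q) {c : ℕ → ℝ} (hc : ∀ j : ℕ, c j = ((j : ℝ) - 1) * h) :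
    condQuantError (uniformOn 0 (m * h)) (c '' Icc 1 (m + 1)) n
        = h ^ 2 / (12 * m) * (q / ((k : ℝ) + 1) ^ 2 + (m - q) / (k : ℝ) ^ 2)
      ∧ distortion (uniformOn 0 (m * h)) ↑(cellGrid h (fun j => if j < q then k + 1 else k) m)
        = h ^ 2 / (12 * m) * (q / ((k : ℝ) + 1) ^ 2 + (m - q) / (k : ℝ) ^ 2) := by
  set N : ℕ → ℕ := fun j => if j < q then k + 1 else k
  set Γ : Set ℝ := ↑(cellGrid h N m)
  set β := c '' Icc 1 (m + 1)
  set P := uniformOn 0 (m * h)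
  have hm : 0 < m := by omega
  have hN : ∀ j < m, N j ≠ 0 := fun j _ => by
    simp only [N]
    split_ifs <;> omega
  have hβmem : ∀ j ≤ m, (j : ℝ) * h ∈ β := fun j => natCast_mul_mem_image_Icc hc
  obtain ⟨k, rfl⟩ := Nat.exists_eq_add_of_le' hk
  have hbudget : n - β.ncard = m * k + q := by
    rw [ncard_image_Icc hc hh.ne', hn, Nat.mul_succ]
    omega
  have hsumN : ∑ j ∈ Finset.range m, (N j - 1) = m * k + q := by
    rw [sum_range_apply_ite_lt hqm.le (· - 1), smul_eq_mul, smul_eq_mul, Nat.add_sub_cancel,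
      Nat.add_sub_cancel]
    obtain ⟨d, rfl⟩ := Nat.exists_eq_add_of_le hqm.le
    rw [Nat.add_sub_cancel_left]
    ring
  set V := h ^ 2 / (12 * m) * (q / (((k + 1 : ℕ) : ℝ) + 1) ^ 2 + (m - q) / ((k + 1 : ℕ) : ℝ) ^ 2)
    with hV
  have hlow : V ∈ lowerBounds {v | ∃ α : Set ℝ, α.Finite ∧ α.ncard ≤ n - β.ncard ∧
      v = distortion P (α ∪ β)} := by
    rintro _ ⟨α, hα, hcard, rfl⟩
    exact le_distortion_uniformOn_union hh hm hk hα ((finite_Icc _ _).image c) hβmem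
      (fun _ => exists_eq_natCast_mul_of_mem_image_Icc hc) (by rwa [hbudget] at hcard)
  have hΓ : distortion P Γ ≤ V := by
    refine (distortion_uniformOn_cellGrid_le hh hm hN).trans_eq ?_
    rw [hV, sum_range_apply_ite_lt hqm.le (fun N : ℕ => 1 / (N : ℝ) ^ 2), nsmul_eq_mul,
      nsmul_eq_mul, Nat.cast_sub hqm.le]
    push_cast
    ring
  have hΓmem : distortion P Γ ∈ {v | ∃ α : Set ℝ, α.Finite ∧ α.ncard ≤ n - β.ncard ∧
      v = distortion P (α ∪ β)} :=
    ⟨Γ \ β, (Finset.finite_toSet _).sdiff, hbudget ▸ hsumN ▸ ncard_cellGrid_sdiff_le hN hβmem,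
      by rw [sdiff_union_of_subset (image_Icc_subset_cellGrid hc hN hm)]⟩
  have hΓeq : distortion P Γ = V := le_antisymm hΓ (hlow hΓmem)
  exact ⟨IsLeast.csInf_eq ⟨hΓeq ▸ hΓmem, hlow⟩, hΓeq⟩

/-- The set `γ_n` of the paper. -/
def optimalSet (m k q : ℕ) (r s : ℝ) (c : ℕ → ℝ) : Set ℝ :=
  (⋃ j ∈ Set.Icc 1 q,
      (fun i : ℕ => c j + 2 * ((i : ℝ) - 1) * r * s / ((k : ℝ) + 1)) '' Set.Icc 1 (k + 2))
    ∪ (⋃ j ∈ Set.Icc (q + 1) m,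
      (fun i : ℕ => c j + 2 * ((i : ℝ) - 1) * r * s / (k : ℝ)) '' Set.Icc 1 (k + 1))

lemma optimalSet_eq_cellGrid {m k q : ℕ} (hqm : q ≤ m) {r s : ℝ} {c : ℕ → ℝ}
    (hc : ∀ j : ℕ, c j = 2 * ((j : ℝ) - 1) * r * s) :
    optimalSet m k q r s c = ↑(cellGrid (2 * r * s) (fun j => if j < q then k + 1 else k) m) := by
  have hpoint : ∀ (j i : ℕ) (D : ℝ),
      c (j + 1) + 2 * (((i + 1 : ℕ) : ℝ) - 1) * r * s / D = j * (2 * r * s) + i * (2 * r * s / D) :=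
    fun j i D => by rw [hc]; push_cast; ring
  ext x
  simp only [optimalSet, cellGrid, Finset.coe_biUnion, Finset.coe_image, Finset.coe_range,
    Finset.coe_Iic, mem_union, mem_iUnion, mem_image, mem_Icc, mem_Iio, mem_Iic, exists_prop]
  constructor
  · rintro (⟨j, ⟨hj1, hjq⟩, i, ⟨hi1, hik⟩, rfl⟩ | ⟨j, ⟨hqj, hjm⟩, i, ⟨hi1, hik⟩, rfl⟩)
    · obtain ⟨j, rfl⟩ := Nat.exists_eq_add_of_le' hj1
      obtain ⟨i, rfl⟩ := Nat.exists_eq_add_of_le' hi1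
      refine ⟨j, by omega, i, by rw [if_pos (by omega)]; omega, ?_⟩
      rw [if_pos (by omega), hpoint]
      push_cast
      rfl
    · obtain ⟨j, rfl⟩ := Nat.exists_eq_add_of_le' (by omega : 1 ≤ j)
      obtain ⟨i, rfl⟩ := Nat.exists_eq_add_of_le' hi1
      refine ⟨j, by omega, i, by rw [if_neg (by omega)]; omega, ?_⟩
      rw [if_neg (by omega), hpoint]
  · rintro ⟨j, hjm, i, hi, rfl⟩
    by_cases hjq : j < q
    · rw [if_pos hjq] at hi ⊢
      refine Or.inl ⟨j + 1, ⟨by omega, by omega⟩, i + 1, ⟨by omega, by omega⟩, ?_⟩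
      rw [hpoint]
      push_cast
      rfl
    · rw [if_neg hjq] at hi ⊢
      exact Or.inr ⟨j + 1, ⟨by omega, by omega⟩, i + 1, ⟨by omega, by omega⟩, hpoint j i k⟩

lemma sin_pi_div_pos {m : ℕ} (hm : 1 < m) : 0 < Real.sin (Real.pi / m) :=
  Real.sin_pos_of_pos_of_lt_pi (by positivity) (div_lt_self Real.pi_pos (by exact_mod_cast hm))

theorem stmt14_general (m : ℕ) (hm : 3 ≤ m) (r : ℝ) (hr : 0 < r) (k q : ℕ) (hk : 1 ≤ k)
    (hqm : q < m) (n : ℕ) (hn : n = m * k + 1 + q)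
    (c : ℕ → ℝ) (hc : ∀ j : ℕ, c j = 2 * ((j : ℝ) - 1) * r * Real.sin (Real.pi / m)) :
    condQuantError (uniformOn 0 (2 * m * r * Real.sin (Real.pi / m)))
        (c '' Set.Icc 1 (m + 1)) n
      = r ^ 2 * q * Real.sin (Real.pi / m) ^ 2 / (3 * m * ((k : ℝ) + 1) ^ 2)
        + r ^ 2 * ((m : ℝ) - q) * Real.sin (Real.pi / m) ^ 2 / (3 * m * (k : ℝ) ^ 2)
    ∧ distortion (uniformOn 0 (2 * m * r * Real.sin (Real.pi / m)))
        ((⋃ j ∈ Set.Icc 1 q,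
            (fun i : ℕ =>
              c j + 2 * ((i : ℝ) - 1) * r * Real.sin (Real.pi / m) / ((k : ℝ) + 1)) ''
              Set.Icc 1 (k + 2))
          ∪ (⋃ j ∈ Set.Icc (q + 1) m,
              (fun i : ℕ =>
                c j + 2 * ((i : ℝ) - 1) * r * Real.sin (Real.pi / m) / (k : ℝ)) ''
                Set.Icc 1 (k + 1)))
      = r ^ 2 * q * Real.sin (Real.pi / m) ^ 2 / (3 * m * ((k : ℝ) + 1) ^ 2)
        + r ^ 2 * ((m : ℝ) - q) * Real.sin (Real.pi / m) ^ 2 / (3 * m * (k : ℝ) ^ 2) := by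
  set s := Real.sin (Real.pi / m)
  have hh : 0 < 2 * r * s := by
    have := sin_pi_div_pos (by omega : 1 < m)
    positivity
  have hgrid := condQuantError_uniformOn_grid hh hk hqm hn (c := c) fun j => by rw [hc]; ring
  rw [← optimalSet_eq_cellGrid hqm.le hc, show (m : ℝ) * (2 * r * s) = 2 * m * r * s by ring,
    show (2 * r * s) ^ 2 / (12 * m) * (q / ((k : ℝ) + 1) ^ 2 + (m - q) / (k : ℝ) ^ 2)
      = r ^ 2 * q * s ^ 2 / (3 * m * ((k : ℝ) + 1) ^ 2)
        + r ^ 2 * ((m : ℝ) - q) * s ^ 2 / (3 * m * (k : ℝ) ^ 2) by field_simp; ring] at hgrid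
  exact hgrid

/-- Proposition 4.4 (case `0 < q < m`): for `n = mk + 1 + q`, the `n`-th conditional
quantization error of the uniform distribution on `[0, 2mr sin(π/m)]` with respect to
`{c_j : 1 ≤ j ≤ m+1}`, `c_j = 2(j-1)r sin(π/m)`, equals
`r²q sin²(π/m)/(3m(k+1)²) + r²(m-q) sin²(π/m)/(3mk²)`, attained by the stated set. -/
theorem stmt14 (m : ℕ) (hm : 3 ≤ m) (r : ℝ) (hr : 0 < r) (k q : ℕ) (hk : 1 ≤ k)
    (hq0 : 0 < q) (hqm : q < m) (n : ℕ) (hn : n = m * k + 1 + q)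
    (c : ℕ → ℝ) (hc : ∀ j : ℕ, c j = 2 * ((j : ℝ) - 1) * r * Real.sin (Real.pi / m)) :
    condQuantError (uniformOn 0 (2 * m * r * Real.sin (Real.pi / m)))
        (c '' Set.Icc 1 (m + 1)) n
      = r ^ 2 * q * Real.sin (Real.pi / m) ^ 2 / (3 * m * ((k : ℝ) + 1) ^ 2)
        + r ^ 2 * ((m : ℝ) - q) * Real.sin (Real.pi / m) ^ 2 / (3 * m * (k : ℝ) ^ 2)
    ∧ distortion (uniformOn 0 (2 * m * r * Real.sin (Real.pi / m)))
        ((⋃ j ∈ Set.Icc 1 q,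
            (fun i : ℕ =>
              c j + 2 * ((i : ℝ) - 1) * r * Real.sin (Real.pi / m) / ((k : ℝ) + 1)) ''
              Set.Icc 1 (k + 2))
          ∪ (⋃ j ∈ Set.Icc (q + 1) m,
              (fun i : ℕ =>
                c j + 2 * ((i : ℝ) - 1) * r * Real.sin (Real.pi / m) / (k : ℝ)) ''
                Set.Icc 1 (k + 1)))
      = r ^ 2 * q * Real.sin (Real.pi / m) ^ 2 / (3 * m * ((k : ℝ) + 1) ^ 2)
        + r ^ 2 * ((m : ℝ) - q) * Real.sin (Real.pi / m) ^ 2 / (3 * m * (k : ℝ) ^ 2) :=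
  stmt14_general m hm r hr k q hk hqm n hn c hc
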